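/- arXiv:1712.01341 — 2 statements merged into one kernel-verified Lean document; each statement's English description precedes it below -/
import Mathlib

section
/- Let [f] be an interval function assigning to each subset B ⊆ ∂Ω a box [f](B) ⊆ ℝ², and suppose ∂Ω = ⋃_{k=1}^p B_k with 0 ∉ [f](B_k) for all k. Then for any two continuous maps g, h : Ω → ℝ² with g(t), h(t) ∈ [f](B_k) for all t ∈ B_k and all k, we have deg(g, Ω, 0) = deg(h, Ω, 0). -/
/-- An abstract Brouwer degree theory for continuous maps `ℝ² → ℝ²` on compact
sets, satisfying the classical axioms: normalization, additivity of domain,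
and homotopy invariance (for homotopies nonvanishing on the boundary). -/
structure BrouwerDegreeTheory where
  /-- `deg f Ω` is the topological degree of `f` on `Ω` with respect to `0`. -/
  deg : ((ℝ × ℝ) → (ℝ × ℝ)) → Set (ℝ × ℝ) → ℤ
  /-- Normalization: translations of the identity have degree one when the
  target point lies in the interior. -/
  normalization : ∀ (Ω : Set (ℝ × ℝ)) (y : ℝ × ℝ), IsCompact Ω →
    y ∈ interior Ω → deg (fun x => x - y) Ω = 1
  /-- Additivity/excision: if `f` does not vanish on `Ω` outside the interiors
  of two compact subsets with disjoint interiors, the degree splits. -/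
  additivity : ∀ (f : (ℝ × ℝ) → (ℝ × ℝ)) (Ω Ω₁ Ω₂ : Set (ℝ × ℝ)),
    Continuous f → IsCompact Ω → IsCompact Ω₁ → IsCompact Ω₂ →
    Ω₁ ⊆ Ω → Ω₂ ⊆ Ω → Disjoint (interior Ω₁) (interior Ω₂) →
    (∀ x ∈ Ω \ (interior Ω₁ ∪ interior Ω₂), f x ≠ 0) →
    deg f Ω = deg f Ω₁ + deg f Ω₂
  /-- Homotopy invariance: a homotopy avoiding `0` on the boundary preserves
  the degree. -/
  homotopy_invariance : ∀ (H : ℝ → (ℝ × ℝ) → (ℝ × ℝ)) (Ω : Set (ℝ × ℝ)),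
    IsCompact Ω → Continuous (fun q : ℝ × (ℝ × ℝ) => H q.1 q.2) →
    (∀ s ∈ Set.Icc (0 : ℝ) 1, ∀ x ∈ frontier Ω, H s x ≠ 0) →
    deg (H 0) Ω = deg (H 1) Ω
/-- Theorem 2.9-style determinacy of the degree by an inclusion function: if
the boundary of a compact `Ω ⊂ ℝ²` is covered by finitely many sets `B k`, each
assigned a box `F k` (a product of two closed intervals) not containing `0`,
then any two continuous maps `g, h` taking values in `F k` on `B k` for all `k`
have the same degree on `Ω`. -/
theorem degree_determined_by_inclusion (D : BrouwerDegreeTheory)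
    (Ω : Set (ℝ × ℝ)) (hΩ : IsCompact Ω) (p : ℕ)
    (B F : Fin p → Set (ℝ × ℝ))
    (hcover : frontier Ω ⊆ ⋃ k, B k)
    (hbox : ∀ k, ∃ a b c d : ℝ, F k = Set.Icc a b ×ˢ Set.Icc c d)
    (hzero : ∀ k, (0 : ℝ × ℝ) ∉ F k)
    (g h : (ℝ × ℝ) → (ℝ × ℝ)) (hg : Continuous g) (hh : Continuous h)
    (hgF : ∀ k, ∀ t ∈ B k, g t ∈ F k)
    (hhF : ∀ k, ∀ t ∈ B k, h t ∈ F k) :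
    D.deg g Ω = D.deg h Ω := by
  set H : ℝ → (ℝ × ℝ) → (ℝ × ℝ) := fun s x => (1 - s) • g x + s • h x with hH
  have h0 : H 0 = g := by funext x; simp [hH]
  have h1 : H 1 = h := by funext x; simp [hH]
  rw [← h0, ← h1]
  apply D.homotopy_invariance H Ω hΩ
  · exact ((continuous_const.sub continuous_fst).smul
      (hg.comp continuous_snd)).add (continuous_fst.smul (hh.comp continuous_snd))
  · intro s hs x hx
    obtain ⟨k, hk⟩ := Set.mem_iUnion.mp (hcover hx)
    have hconv : Convex ℝ (F k) := by
      obtain ⟨a, b, c, d, hF⟩ := hbox k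
      rw [hF]
      exact (convex_Icc a b).prod (convex_Icc c d)
    have : H s x ∈ F k := by
      refine hconv (hgF k x hk) (hhF k x hk) ?_ ?_ (by ring)
      · linarith [hs.2]
      · exact hs.1
    exact fun h0 => hzero k (h0 ▸ this)
end

section
/- Let γ : [0,1] → ℝ² \ {0} be a continuous loop (γ(0) = γ(1)), and suppose there exist 0 = s₀ < s₁ < ⋯ < s_p = 1 such that on each arc γ([s_{k−1}, s_k]) some fixed coordinate (first or second) of γ has constant sign. Then the winding number of γ around 0 is computable from the sequence of sign tags (c_k, σ_k) ∈ {1,2} × {+,−} alone; in particular, it is the same for any other loop admitting the same tagging on the same subdivision. -/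
open Complex Classical

/-- The winding number around `0` of a loop `γ : [0,1] → ℂ \ {0}`, defined
through a continuous argument lift: a continuous `θ` with
`γ s = ‖γ s‖ · exp(i θ s)` on `[0,1]`; the winding number is
`(θ 1 − θ 0) / (2π)`. -/
noncomputable def windingNumber (γ : ℝ → ℂ) : ℤ :=
  if h : ∃ θ : ℝ → ℝ, ContinuousOn θ (Set.Icc 0 1) ∧
      ∀ s ∈ Set.Icc (0 : ℝ) 1, γ s = (‖γ s‖ : ℂ) * Complex.exp ((θ s : ℂ) * Complex.I)
  then round ((h.choose 1 - h.choose 0) / (2 * Real.pi))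
  else 0
/-- The coordinate of a point of `ℝ² ≅ ℂ`: coordinate `0` is the real part,
coordinate `1` the imaginary part. -/
def coordOf (c : Fin 2) (z : ℂ) : ℝ := if c = 0 then z.re else z.im

/-- A loop together with a subdivision `0 = s₀ < s₁ < ⋯ < s_p = 1` and sign
tags `(c_k, σ_k)`: on the `k`-th arc, coordinate `c_k` of the loop has constant
sign `σ_k` (`true` for `+`, `false` for `−`). -/
def AdmitsTagging (γ : ℝ → ℂ) (p : ℕ) (s : Fin (p + 1) → ℝ)
    (c : Fin p → Fin 2) (σ : Fin p → Bool) : Prop :=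
  ∀ k : Fin p, ∀ t ∈ Set.Icc (s k.castSucc) (s k.succ),
    if σ k then 0 < coordOf (c k) (γ t) else coordOf (c k) (γ t) < 0

/-!
A nonvanishing loop has a continuous argument lift, by path lifting along the covering map
`exp : ℂ → ℂ \ {0}`. Let `θ` and `φ` be lifts of `γ` and `δ`. Every `t` lies in some tagged arc,
where `γ t` and `δ t` lie in the same open half-plane, so they never point in opposite
directions: `θ - φ` never meets `π + 2πℤ`. By the intermediate value theorem a continuous
function avoiding this lattice varies by less than `2π`, while the loop condition puts the
increment of `θ - φ` in `2πℤ`; so `θ` and `φ` have the same increment.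
-/

open Set

theorem exists_continuousOn_arg_lift {γ : ℝ → ℂ} (hγ : ContinuousOn γ (Icc 0 1))
    (hne : ∀ t ∈ Icc (0 : ℝ) 1, γ t ≠ 0) :
    ∃ θ : ℝ → ℝ, ContinuousOn θ (Icc 0 1) ∧ ∀ t ∈ Icc (0 : ℝ) 1, γ t = ‖γ t‖ * exp (θ t * I) := by
  let γI : C(unitInterval, {z : ℂ // z ≠ 0}) :=
    ⟨fun t ↦ ⟨γ t, hne t t.2⟩,
      (hγ.comp_continuous continuous_subtype_val Subtype.prop).subtype_mk _⟩
  obtain ⟨Γ, hΓ, -⟩ := isCoveringMap_exp.exists_path_lifts γI (log (γ 0))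
    (Subtype.ext (exp_log (hne 0 unitInterval.zero_mem)).symm)
  refine ⟨fun t ↦ (Γ (projIcc 0 1 zero_le_one t)).im, by fun_prop, fun t ht ↦ ?_⟩
  have hexp : exp (Γ ⟨t, ht⟩) = γ t := congr_arg Subtype.val (congr_fun hΓ ⟨t, ht⟩)
  rw [← hexp, norm_exp, ofReal_exp, ← exp_add]
  simp [projIcc_of_mem _ ht, re_add_im]

theorem eq_of_exp_mul_I_eq_of_forall_ne_neg_one {ψ : ℝ → ℝ} {a b : ℝ}
    (hψ : ContinuousOn ψ (uIcc a b)) (hend : exp (ψ b * I) = exp (ψ a * I))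
    (hne : ∀ t ∈ uIcc a b, exp (ψ t * I) ≠ -1) : ψ b = ψ a := by
  obtain ⟨m, hm⟩ := exp_eq_exp_iff_exists_int.mp hend
  have hm' : ψ b - ψ a = m * (2 * Real.pi) := by
    apply ofReal_injective
    apply mul_right_cancel₀ I_ne_zero
    push_cast; linear_combination hm
  by_contra hba
  have hlen : ψ a ⊓ ψ b + 2 * Real.pi ≤ ψ a ⊔ ψ b := by
    have hm1 : (1 : ℝ) ≤ |(m : ℝ)| := by
      exact_mod_cast Int.one_le_abs (by rintro rfl; simp [sub_eq_zero] at hm'; exact hba hm')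
    have := max_sub_min_eq_abs (ψ a) (ψ b)
    rw [hm', abs_mul, abs_of_pos Real.two_pi_pos] at this
    nlinarith [Real.two_pi_pos]
  -- `toIcoMod` yields the point of `π + 2πℤ` in `[min, min + 2π)`, which lies in `ψ '' [a, b]`.
  have hπ := toIcoMod_mem_Ico Real.two_pi_pos (ψ a ⊓ ψ b) Real.pi
  obtain ⟨t, ht, hψt⟩ := intermediate_value_uIcc hψ ⟨hπ.1, by linarith [hπ.2]⟩
  apply hne t ht
  rw [hψt, ← self_sub_toIcoDiv_zsmul, zsmul_eq_mul]
  push_cast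
  rw [sub_mul, exp_sub, exp_pi_mul_I, mul_assoc, exp_int_mul_two_pi_mul_I, div_one]

theorem exp_mul_I_eq_div_norm {z : ℂ} {x : ℝ} (hz : z = ‖z‖ * exp (x * I)) (hz0 : z ≠ 0) :
    exp (x * I) = z / ‖z‖ := by
  rw [eq_div_iff (ofReal_ne_zero.mpr (norm_ne_zero_iff.mpr hz0)), mul_comm]
  exact hz.symm

theorem lift_sub_eq_of_forall_ne_neg_mul {γ δ : ℝ → ℂ} {θ φ : ℝ → ℝ}
    (hθ : ContinuousOn θ (Icc 0 1)) (hφ : ContinuousOn φ (Icc 0 1))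
    (hγθ : ∀ t ∈ Icc (0 : ℝ) 1, γ t = ‖γ t‖ * exp (θ t * I))
    (hδφ : ∀ t ∈ Icc (0 : ℝ) 1, δ t = ‖δ t‖ * exp (φ t * I))
    (hγne : ∀ t ∈ Icc (0 : ℝ) 1, γ t ≠ 0) (hδne : ∀ t ∈ Icc (0 : ℝ) 1, δ t ≠ 0)
    (hγloop : γ 0 = γ 1) (hδloop : δ 0 = δ 1)
    (hanti : ∀ t ∈ Icc (0 : ℝ) 1, ∀ r : ℝ, 0 < r → γ t ≠ -(r * δ t)) :
    θ 1 - θ 0 = φ 1 - φ 0 := by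
  have hdiff : ∀ t ∈ Icc (0 : ℝ) 1,
      exp (((θ - φ) t : ℝ) * I) = (γ t / ‖γ t‖) / (δ t / ‖δ t‖) := fun t ht ↦ by
    rw [Pi.sub_apply, ofReal_sub, sub_mul, exp_sub, exp_mul_I_eq_div_norm (hγθ t ht) (hγne t ht),
      exp_mul_I_eq_div_norm (hδφ t ht) (hδne t ht)]
  have h01 : uIcc (0 : ℝ) 1 = Icc 0 1 := uIcc_of_le zero_le_one
  have key : (θ - φ) 1 = (θ - φ) 0 := by
    refine eq_of_exp_mul_I_eq_of_forall_ne_neg_one (h01 ▸ hθ.sub hφ) ?_ fun t ht h ↦ ?_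
    · rw [hdiff 1 unitInterval.one_mem, hdiff 0 unitInterval.zero_mem, hγloop, hδloop]
    · rw [h01] at ht
      have hγ0 : (‖γ t‖ : ℂ) ≠ 0 := ofReal_ne_zero.2 (norm_ne_zero_iff.2 (hγne t ht))
      have hδ0 : (‖δ t‖ : ℂ) ≠ 0 := ofReal_ne_zero.2 (norm_ne_zero_iff.2 (hδne t ht))
      have hδt := hδne t ht
      refine hanti t ht (‖γ t‖ / ‖δ t‖)
        (div_pos (norm_pos_iff.2 (hγne t ht)) (norm_pos_iff.2 hδt)) ?_
      rw [hdiff t ht] at h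
      field_simp at h
      push_cast
      field_simp
      linear_combination h
  simpa [sub_eq_sub_iff_sub_eq_sub] using key

theorem windingNumber_eq_of_forall_ne_neg_mul {γ δ : ℝ → ℂ}
    (hγ : ContinuousOn γ (Icc 0 1)) (hδ : ContinuousOn δ (Icc 0 1))
    (hγne : ∀ t ∈ Icc (0 : ℝ) 1, γ t ≠ 0) (hδne : ∀ t ∈ Icc (0 : ℝ) 1, δ t ≠ 0)
    (hγloop : γ 0 = γ 1) (hδloop : δ 0 = δ 1)
    (hanti : ∀ t ∈ Icc (0 : ℝ) 1, ∀ r : ℝ, 0 < r → γ t ≠ -(r * δ t)) :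
    windingNumber γ = windingNumber δ := by
  have hγlift := exists_continuousOn_arg_lift hγ hγne
  have hδlift := exists_continuousOn_arg_lift hδ hδne
  rw [windingNumber, windingNumber, dif_pos hγlift, dif_pos hδlift,
    lift_sub_eq_of_forall_ne_neg_mul hγlift.choose_spec.1 hδlift.choose_spec.1
      hγlift.choose_spec.2 hδlift.choose_spec.2 hγne hδne hγloop hδloop hanti]

theorem ne_neg_mul_of_tag {c : Fin 2} {σ : Bool} {z w : ℂ} {r : ℝ} (hr : 0 < r)
    (hz : if σ then 0 < coordOf c z else coordOf c z < 0)
    (hw : if σ then 0 < coordOf c w else coordOf c w < 0) : z ≠ -(r * w) := by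
  rintro rfl
  have hneg : coordOf c (-(r * w)) = -(r * coordOf c w) := by
    unfold coordOf; split <;> simp
  rw [hneg] at hz
  cases σ <;> simp only [Bool.false_eq_true, if_true, if_false] at hz hw <;> nlinarith

theorem Fin.exists_mem_Icc_castSucc_succ {α : Type*} [LinearOrder α] {p : ℕ} (hp : 0 < p)
    {s : Fin (p + 1) → α} {t : α} (h0 : s 0 ≤ t) (h1 : t ≤ s (Fin.last p)) :
    ∃ k : Fin p, t ∈ Icc (s k.castSucc) (s k.succ) := by
  by_contra! hout
  have hstep : ∀ k : Fin p, s k.castSucc ≤ t → s k.succ < t := fun k hk ↦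
    not_le.1 fun hk' ↦ hout k ⟨hk, hk'⟩
  have hle : ∀ i, s i ≤ t := Fin.induction h0 fun k hk ↦ (hstep k hk).le
  obtain ⟨n, rfl⟩ := Nat.exists_eq_add_one_of_ne_zero hp.ne'
  exact (hstep (Fin.last n) (hle _)).not_ge (Fin.succ_last n ▸ h1)

theorem AdmitsTagging.ne_neg_mul {p : ℕ} {s : Fin (p + 1) → ℝ} {c : Fin p → Fin 2}
    {σ : Fin p → Bool} {γ δ : ℝ → ℂ} (hp : 0 < p) (h0 : s 0 = 0) (h1 : s (Fin.last p) = 1)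
    (hγ : AdmitsTagging γ p s c σ) (hδ : AdmitsTagging δ p s c σ) :
    ∀ t ∈ Icc (0 : ℝ) 1, ∀ r : ℝ, 0 < r → γ t ≠ -(r * δ t) := by
  intro t ht r hr
  obtain ⟨k, hk⟩ := Fin.exists_mem_Icc_castSucc_succ hp (h0 ▸ ht.1) (h1 ▸ ht.2)
  exact ne_neg_mul_of_tag hr (hγ k t hk) (hδ k t hk)

theorem winding_determined_by_tags_general (p : ℕ) (hp : 0 < p)
    (s : Fin (p + 1) → ℝ)
    (h0 : s 0 = 0) (h1 : s (Fin.last p) = 1)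
    (c : Fin p → Fin 2) (σ : Fin p → Bool)
    (γ δ : ℝ → ℂ)
    (hγ : ContinuousOn γ (Set.Icc 0 1)) (hδ : ContinuousOn δ (Set.Icc 0 1))
    (hγne : ∀ t ∈ Set.Icc (0 : ℝ) 1, γ t ≠ 0)
    (hδne : ∀ t ∈ Set.Icc (0 : ℝ) 1, δ t ≠ 0)
    (hγloop : γ 0 = γ 1) (hδloop : δ 0 = δ 1)
    (hγtag : AdmitsTagging γ p s c σ) (hδtag : AdmitsTagging δ p s c σ) :
    windingNumber γ = windingNumber δ :=
  windingNumber_eq_of_forall_ne_neg_mul hγ hδ hγne hδne hγloop hδloop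
    (hγtag.ne_neg_mul hp h0 h1 hδtag)

/-- The winding number around `0` of a continuous loop `γ : [0,1] → ℂ \ {0}`
is determined by a sign tagging of the arcs of a subdivision alone: any other
continuous loop admitting the same tags on the same subdivision has the same
winding number. -/
theorem winding_determined_by_tags (p : ℕ) (hp : 0 < p)
    (s : Fin (p + 1) → ℝ) (hmono : StrictMono s)
    (h0 : s 0 = 0) (h1 : s (Fin.last p) = 1)
    (c : Fin p → Fin 2) (σ : Fin p → Bool)
    (γ δ : ℝ → ℂ)
    (hγ : ContinuousOn γ (Set.Icc 0 1)) (hδ : ContinuousOn δ (Set.Icc 0 1))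
    (hγne : ∀ t ∈ Set.Icc (0 : ℝ) 1, γ t ≠ 0)
    (hδne : ∀ t ∈ Set.Icc (0 : ℝ) 1, δ t ≠ 0)
    (hγloop : γ 0 = γ 1) (hδloop : δ 0 = δ 1)
    (hγtag : AdmitsTagging γ p s c σ) (hδtag : AdmitsTagging δ p s c σ) :
    windingNumber γ = windingNumber δ :=
  winding_determined_by_tags_general p hp s h0 h1 c σ γ δ hγ hδ hγne hδne hγloop hδloop hγtag hδtag
end
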